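/- Let R = ℤ[d₂, d₃, d₄, y]/(2d₃, y·d₃, y² − 4d₄) with grading deg d_i = 2i, deg y = 4. Suppose φ: R → ℤ[p₁, e, b]/(2b) is the graded ring homomorphism with φ(d₂) = −p₁, φ(d₃) = b², φ(d₄) = e², φ(y) = 2e (degrees: p₁, e have degree 4, b has degree 3). Then φ is well-defined (respects the relations 2d₃, y·d₃, y² − 4d₄) and its image is the subring generated by p₁, e², 2e, b². -/

import Mathlib

/-!
The four images `-p₁, b², e², 2e` satisfy the relations of the Chow ring: `2b = 0` kills `2·b²`
and `2e·b²`, while `(2e)² = 4e²` holds already in the polynomial ring. So the evaluation map on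
`ℤ[d₂, d₃, d₄, y]` factors through `CH^*(BSO₄)`. Its image, like that of any evaluation of an
integral polynomial ring, is the subring generated by the images of the variables, and replacing
`-p₁` by `p₁` does not change that subring.
-/

open MvPolynomial

/-- The defining ideal of `H^*(BSO₄; ℤ) = ℤ[p₁, e, b]/(2b)`, with variables
`X 0 = p₁`, `X 1 = e = √p₂`, `X 2 = b = β̃w₂`. -/
noncomputable def cohIdeal : Ideal (MvPolynomial (Fin 3) ℤ) :=
  Ideal.span {2 * X 2}

/-- The integral cohomology ring of `BSO₄`. -/
noncomputable abbrev CohS : Type := MvPolynomial (Fin 3) ℤ ⧸ cohIdeal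

/-- The defining ideal of `CH^*(BSO₄) = ℤ[d₂,d₃,d₄,y]/(2d₃, y·d₃, y² - 4d₄)`,
with variables `X 0 = d₂`, `X 1 = d₃`, `X 2 = d₄`, `X 3 = y`. -/
noncomputable def chowIdeal : Ideal (MvPolynomial (Fin 4) ℤ) :=
  Ideal.span {2 * X 1, X 3 * X 1, X 3 ^ 2 - 4 * X 2}

/-- The Chow ring of `BSO₄`. -/
noncomputable abbrev ChowR : Type := MvPolynomial (Fin 4) ℤ ⧸ chowIdeal

theorem Ideal.Quotient.range_lift {R S : Type*} [Ring R] [Semiring S] (I : Ideal R)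
    [I.IsTwoSided] (f : R →+* S) (hf : ∀ a ∈ I, f a = 0) :
    Set.range (Ideal.Quotient.lift I f hf) = Set.range f := by
  rw [← Ideal.Quotient.mk_surjective.range_comp]
  rfl

theorem MvPolynomial.range_aeval_int {σ S : Type*} [CommRing S] (g : σ → S) :
    Set.range (aeval (R := ℤ) g) = Subring.closure (Set.range g) := by
  rw [← AlgHom.coe_range, ← Algebra.adjoin_range_eq_range_aeval, Algebra.adjoin_int]
  rfl

theorem Subring.closure_insert_neg {R : Type*} [Ring R] (a : R) (s : Set R) :
    Subring.closure (insert (-a) s) = Subring.closure (insert a s) := by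
  have key : ∀ b : R, Subring.closure (insert (-b) s) ≤ Subring.closure (insert b s) := by
    intro b
    rw [Subring.closure_le, Set.insert_subset_iff]
    exact ⟨neg_mem (subset_closure (Set.mem_insert b s)),
      fun x hx => subset_closure (Set.mem_insert_of_mem b hx)⟩
  refine le_antisymm (key a) ?_
  simpa only [neg_neg] using key (-a)

theorem two_mul_mk_X_two : (2 : CohS) * Ideal.Quotient.mk cohIdeal (X 2) = 0 := by
  rw [← map_ofNat (Ideal.Quotient.mk cohIdeal) 2, ← map_mul, Ideal.Quotient.eq_zero_iff_mem]
  exact Ideal.subset_span rfl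

noncomputable def cycleClassGens : Fin 4 → CohS :=
  ![-Ideal.Quotient.mk cohIdeal (X 0), Ideal.Quotient.mk cohIdeal (X 2) ^ 2,
    Ideal.Quotient.mk cohIdeal (X 1) ^ 2, 2 * Ideal.Quotient.mk cohIdeal (X 1)]

theorem chowIdeal_le_ker_aeval_cycleClassGens :
    chowIdeal ≤ RingHom.ker (aeval (R := ℤ) cycleClassGens) := by
  set e := Ideal.Quotient.mk cohIdeal (X 1)
  set b := Ideal.Quotient.mk cohIdeal (X 2)
  simp only [chowIdeal, Ideal.span_le, Set.insert_subset_iff, Set.singleton_subset_iff,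
    SetLike.mem_coe, RingHom.mem_ker, map_mul, map_sub, map_pow, map_ofNat, aeval_X]
  simp only [cycleClassGens, Matrix.cons_val]
  refine ⟨?_, ?_, by ring⟩
  · linear_combination b * two_mul_mk_X_two
  · linear_combination e * b * two_mul_mk_X_two

noncomputable def cycleClass : ChowR →+* CohS :=
  Ideal.Quotient.lift chowIdeal (aeval cycleClassGens).toRingHom fun _ ha =>
    RingHom.mem_ker.1 (chowIdeal_le_ker_aeval_cycleClassGens ha)

theorem cycleClass_mk_X (i : Fin 4) :
    cycleClass (Ideal.Quotient.mk chowIdeal (X i)) = cycleClassGens i := by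
  simp [cycleClass]

theorem range_cycleClass :
    Set.range cycleClass = Subring.closure (Set.range cycleClassGens) := by
  rw [cycleClass, Ideal.Quotient.range_lift]
  exact range_aeval_int cycleClassGens

/-- There is a well-defined (cycle class) ring map `φ : CH^*(BSO₄) → H^*(BSO₄;ℤ)` with
`φ d₂ = -p₁`, `φ d₃ = b²`, `φ d₄ = e²`, `φ y = 2e`, and its image is the subring
generated by `p₁, e², 2e, b²`. -/
theorem stmt_15 :
    ∃ φ : ChowR →+* CohS,
      φ (Ideal.Quotient.mk chowIdeal (X 0)) = -(Ideal.Quotient.mk cohIdeal (X 0)) ∧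
      φ (Ideal.Quotient.mk chowIdeal (X 1)) = Ideal.Quotient.mk cohIdeal (X 2) ^ 2 ∧
      φ (Ideal.Quotient.mk chowIdeal (X 2)) = Ideal.Quotient.mk cohIdeal (X 1) ^ 2 ∧
      φ (Ideal.Quotient.mk chowIdeal (X 3)) = 2 * Ideal.Quotient.mk cohIdeal (X 1) ∧
      Set.range ⇑φ =
        ↑(Subring.closure
          {Ideal.Quotient.mk cohIdeal (X 0),
           Ideal.Quotient.mk cohIdeal (X 1) ^ 2,
           2 * Ideal.Quotient.mk cohIdeal (X 1),
           Ideal.Quotient.mk cohIdeal (X 2) ^ 2}) := by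
  refine ⟨cycleClass, cycleClass_mk_X 0, cycleClass_mk_X 1, cycleClass_mk_X 2, cycleClass_mk_X 3,
    ?_⟩
  rw [range_cycleClass, SetLike.coe_set_eq]
  simp only [cycleClassGens, Matrix.range_cons, Matrix.range_empty, Set.union_empty,
    Set.singleton_union, Subring.closure_insert_neg]
  congr 1
  ext
  simp only [Set.mem_insert_iff, Set.mem_singleton_iff]
  tauto
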